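/- Let P be a decision procedure on List2 X that is strongly inductive (SIND). Then P satisfies γ⁺-extended (γ⁺E). -/

import Mathlib

/-!
Strong inductivity makes `P (Cat a b)` a function of `P a` and `P b` alone, and an idempotent
one. Hence, if `P b` occurs in `a`, replacing the leaf `Sing2 (P b)` of `a` by
`Cat (Sing2 (P b)) b` adds exactly the alternatives of `b` without changing the value of `P`
at any node on the way up to the root.
-/

/-- The algebraic datatype `List2 X` of nonempty lists built from singletons and
concatenation. -/
inductive List2 (X : Type) : Type where
  | Sing2 : X → List2 X
  | Cat : List2 X → List2 X → List2 X

variable {X : Type} [DecidableEq X]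

/-- The extension of a represented decision problem: the set of alternatives it
contains. -/
def List2.ext : List2 X → Finset X
  | .Sing2 x => {x}
  | .Cat a b => a.ext ∪ b.ext

theorem List2.ext_nonempty : ∀ a : List2 X, a.ext.Nonempty
  | .Sing2 x => ⟨x, by simp [List2.ext]⟩
  | .Cat a b => (List2.ext_nonempty a).mono (by simp [List2.ext, Finset.subset_union_left])

namespace List2

def StronglyInductive (P : List2 X → X) : Prop :=
  ∀ x y : X,
    (∀ a b : List2 X, P a = x → P b = y → P (Cat a b) = x) ∨
    (∀ a b : List2 X, P a = x → P b = y → P (Cat a b) = y)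

def GammaPlusExtended (P : List2 X → X) : Prop :=
  ∀ a b : List2 X, P b ∈ a.ext → ∃ d : List2 X, d.ext = a.ext ∪ b.ext ∧ P d = P a

theorem apply_sing2 {P : List2 X → X} (hP : ∀ a, P a ∈ a.ext) (x : X) : P (Sing2 x) = x := by
  simpa [List2.ext] using hP (Sing2 x)

namespace StronglyInductive

variable {Y : Type} {P : List2 Y → Y}

theorem apply_cat_congr (hP : StronglyInductive P) {a a' b b' : List2 Y}
    (ha : P a = P a') (hb : P b = P b') : P (Cat a b) = P (Cat a' b') := by
  rcases hP (P a) (P b) with h | h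
  · rw [h a b rfl rfl, h a' b' ha.symm hb.symm]
  · rw [h a b rfl rfl, h a' b' ha.symm hb.symm]

theorem apply_cat_of_eq (hP : StronglyInductive P) {a b : List2 Y} {x : Y}
    (ha : P a = x) (hb : P b = x) : P (Cat a b) = x := by
  rcases hP x x with h | h <;> exact h a b ha hb

end StronglyInductive

theorem StronglyInductive.gammaPlusExtended {P : List2 X → X} (hP : ∀ a, P a ∈ a.ext)
    (hSIND : StronglyInductive P) : GammaPlusExtended P := by
  intro a b hb
  induction a with
  | Sing2 x =>
    have hx := apply_sing2 hP x
    rw [List2.ext, Finset.mem_singleton, ← hx] at hb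
    exact ⟨Cat (Sing2 x) b, rfl, hSIND.apply_cat_of_eq rfl hb⟩
  | Cat a₁ a₂ ih₁ ih₂ =>
    rcases Finset.mem_union.mp hb with hb₁ | hb₂
    · obtain ⟨d₁, hd₁, hPd₁⟩ := ih₁ hb₁
      refine ⟨Cat d₁ a₂, ?_, hSIND.apply_cat_congr hPd₁ rfl⟩
      simp only [List2.ext, hd₁, Finset.union_right_comm]
    · obtain ⟨d₂, hd₂, hPd₂⟩ := ih₂ hb₂
      exact ⟨Cat a₁ d₂, by simp only [List2.ext, hd₂, Finset.union_assoc],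
        hSIND.apply_cat_congr rfl hPd₂⟩

end List2

/-- A strongly inductive decision procedure on `List2 X` satisfies
γ⁺-extended. -/
theorem stmt_13 {X : Type} [DecidableEq X] (P : List2 X → X)
    (hP : ∀ a : List2 X, P a ∈ a.ext)
    (hSIND : ∀ x y : X,
      (∀ a b : List2 X, P a = x → P b = y → P (List2.Cat a b) = x) ∨
      (∀ a b : List2 X, P a = x → P b = y → P (List2.Cat a b) = y)) :
    ∀ a b : List2 X, P b ∈ a.ext →
      ∃ d : List2 X, d.ext = a.ext ∪ b.ext ∧ P d = P a :=
  List2.StronglyInductive.gammaPlusExtended hP hSIND
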